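/- arXiv:2505.22363 — 3 statements merged into one kernel-verified Lean document; each statement's English description precedes it below -/
import Mathlib

section
/- Let T : D → D be a θ-averaged operator on a nonempty closed convex subset D of a Hilbert space, with 0 < θ < 1 and Fix T ≠ ∅. Then the Picard iteration x_{n+1} = T x_n converges weakly to a fixed point of T. -/
/-!
For a fixed point `q` of `T`, the averaged structure gives
`‖T x - q‖² + (1 - θ)/θ · ‖T x - x‖² ≤ ‖x - q‖²`, so the Picard orbit is Fejér monotone with
respect to `Fix T`: it is bounded, `‖xₙ - q‖` converges for every fixed point `q`, and
`‖T xₙ - xₙ‖ → 0`. By the demiclosedness principle every weak cluster point of the orbit is a fixed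
point, and Opial's argument shows that two such cluster points `z, z'` coincide, because
`⟪xₙ, z - z'⟫` converges. Hence the whole orbit converges weakly.
-/

open Filter Topology TopologicalSpace
open scoped RealInnerProductSpace

section Weak

variable {H : Type*} [NormedAddCommGroup H] [InnerProductSpace ℝ H]

def WeakTendsto (u : ℕ → H) (z : H) : Prop :=
  ∀ y : H, Tendsto (fun n => ⟪u n, y⟫) atTop (𝓝 ⟪z, y⟫)

theorem exists_weakTendsto_comp_of_separableSpace [CompleteSpace H] [SeparableSpace H]
    (u : ℕ → H) {C : ℝ} (hC : ∀ n, ‖u n‖ ≤ C) :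
    ∃ z : H, ∃ φ : ℕ → ℕ, StrictMono φ ∧ WeakTendsto (u ∘ φ) z := by
  let f : ℕ → WeakDual ℝ H := fun n => StrongDual.toWeakDual (InnerProductSpace.toDual ℝ H (u n))
  have hf : ∀ n, f n ∈ WeakDual.toStrongDual ⁻¹' Metric.closedBall 0 C := fun n => by
    simpa [f] using hC n
  obtain ⟨g, -, φ, hφ, hlim⟩ := WeakDual.isSeqCompact_closedBall ℝ H (0 : StrongDual ℝ H) C hf
  refine ⟨(InnerProductSpace.toDual ℝ H).symm (WeakDual.toStrongDual g), φ, hφ, fun y => ?_⟩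
  rw [InnerProductSpace.toDual_symm_apply]
  exact tendsto_iff_forall_eval_tendsto_topDualPairing.mp hlim y

theorem exists_weakTendsto_comp_of_bounded [CompleteSpace H]
    (u : ℕ → H) {C : ℝ} (hC : ∀ n, ‖u n‖ ≤ C) :
    ∃ z : H, ∃ φ : ℕ → ℕ, StrictMono φ ∧ WeakTendsto (u ∘ φ) z := by
  let M : Submodule ℝ H := (Submodule.span ℝ (Set.range u)).topologicalClosure
  have : CompleteSpace M := (Submodule.isClosed_topologicalClosure _).completeSpace_coe
  have : SeparableSpace M :=
    ((Set.countable_range u).isSeparable.span.closure).separableSpace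
  have huM : ∀ n, u n ∈ M :=
    fun n => Submodule.le_topologicalClosure _ (Submodule.subset_span (Set.mem_range_self n))
  obtain ⟨z, φ, hφ, hz⟩ :=
    exists_weakTendsto_comp_of_separableSpace (fun n => (⟨u n, huM n⟩ : M)) hC
  refine ⟨z, φ, hφ, fun y => ?_⟩
  simpa using hz (M.orthogonalProjectionOnto y)

theorem WeakTendsto.mem_of_isClosed_of_convex [CompleteSpace H] {D : Set H} (hDcl : IsClosed D)
    (hDcv : Convex ℝ D) {u : ℕ → H} {z : H} (hu : WeakTendsto u z) (huD : ∀ n, u n ∈ D) :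
    z ∈ D := by
  by_contra hz
  obtain ⟨f, r, hfD, hfz⟩ := geometric_hahn_banach_closed_point hDcv hDcl hz
  have hlim : Tendsto (fun n => f (u n)) atTop (𝓝 (f z)) := by
    have := hu ((InnerProductSpace.toDual ℝ H).symm f)
    simpa only [real_inner_comm ((InnerProductSpace.toDual ℝ H).symm f),
      InnerProductSpace.toDual_symm_apply] using this
  exact (le_of_tendsto' hlim fun n => (hfD _ (huD n)).le).not_gt hfz

theorem WeakTendsto.eq_of_tendsto_norm_sub {x : ℕ → H} {z z' : H} {φ ψ : ℕ → ℕ}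
    (hφ : Tendsto φ atTop atTop) (hψ : Tendsto ψ atTop atTop)
    (hz : WeakTendsto (x ∘ φ) z) (hz' : WeakTendsto (x ∘ ψ) z') {c c' : ℝ}
    (hc : Tendsto (fun n => ‖x n - z‖) atTop (𝓝 c))
    (hc' : Tendsto (fun n => ‖x n - z'‖) atTop (𝓝 c')) :
    z = z' := by
  have hpolar : ∀ n, ⟪x n, z - z'⟫ = (‖x n - z'‖ ^ 2 - ‖x n - z‖ ^ 2 + ‖z‖ ^ 2 - ‖z'‖ ^ 2) / 2 := by
    intro n
    rw [inner_sub_right, norm_sub_sq_real, norm_sub_sq_real]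
    ring
  have hlim : Tendsto (fun n => ⟪x n, z - z'⟫) atTop
      (𝓝 ((c' ^ 2 - c ^ 2 + ‖z‖ ^ 2 - ‖z'‖ ^ 2) / 2)) := by
    simp only [hpolar]
    exact ((((hc'.pow 2).sub (hc.pow 2)).add_const _).sub_const _).div_const 2
  have h : ⟪z, z - z'⟫ = ⟪z', z - z'⟫ :=
    (tendsto_nhds_unique (hz _) (hlim.comp hφ)).trans
      (tendsto_nhds_unique (hz' _) (hlim.comp hψ)).symm
  rw [← sub_eq_zero, ← inner_self_eq_zero (𝕜 := ℝ), inner_sub_left, h, sub_self]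

/-- Opial's lemma. -/
theorem exists_weakTendsto_of_tendsto_norm_sub [CompleteSpace H] {x : ℕ → H} {C : ℝ}
    (hx : ∀ n, ‖x n‖ ≤ C) {F : Set H}
    (hnorm : ∀ q ∈ F, ∃ c, Tendsto (fun n => ‖x n - q‖) atTop (𝓝 c))
    (hcluster : ∀ (φ : ℕ → ℕ) (z : H), Tendsto φ atTop atTop → WeakTendsto (x ∘ φ) z → z ∈ F) :
    ∃ z ∈ F, WeakTendsto x z := by
  obtain ⟨z, φ, hφ, hz⟩ := exists_weakTendsto_comp_of_bounded x hx
  have hzF := hcluster φ z hφ.tendsto_atTop hz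
  obtain ⟨c, hc⟩ := hnorm z hzF
  refine ⟨z, hzF, fun y => tendsto_of_subseq_tendsto fun ns hns => ?_⟩
  obtain ⟨z', ψ, hψ, hz'⟩ := exists_weakTendsto_comp_of_bounded (x ∘ ns) (fun n => hx _)
  have hnsψ : Tendsto (ns ∘ ψ) atTop atTop := hns.comp hψ.tendsto_atTop
  obtain ⟨c', hc'⟩ := hnorm z' (hcluster _ z' hnsψ hz')
  obtain rfl := hz.eq_of_tendsto_norm_sub hφ.tendsto_atTop hnsψ hz' hc hc'
  exact ⟨ψ, hz' y⟩

/-- The demiclosedness principle for nonexpansive maps. -/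
theorem LipschitzOnWith.isFixedPt_of_weakTendsto [CompleteSpace H] {D : Set H} {T : H → H}
    (hT : LipschitzOnWith 1 T D) (hDcl : IsClosed D) (hDcv : Convex ℝ D) {w : ℕ → H} {z : H}
    {C : ℝ} (hwD : ∀ k, w k ∈ D) (hwC : ∀ k, ‖w k‖ ≤ C) (hwz : WeakTendsto w z)
    (hres : Tendsto (fun k => ‖T (w k) - w k‖) atTop (𝓝 0)) :
    z ∈ D ∧ Function.IsFixedPt T z := by
  have hzD := hwz.mem_of_isClosed_of_convex hDcl hDcv hwD
  refine ⟨hzD, ?_⟩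
  have hB : ∀ k, ‖w k - z‖ ≤ C + ‖z‖ := fun k =>
    (_root_.norm_sub_le _ _).trans (by linarith [hwC k])
  have hle : ∀ k, 2 * ⟪w k - z, z - T z⟫ + ‖z - T z‖ ^ 2 ≤
      ‖T (w k) - w k‖ ^ 2 + 2 * ‖T (w k) - w k‖ * (C + ‖z‖) := by
    intro k
    have hexp : ‖w k - T z‖ ^ 2 = ‖w k - z‖ ^ 2 + 2 * ⟪w k - z, z - T z⟫ + ‖z - T z‖ ^ 2 := by
      rw [← norm_add_sq_real, sub_add_sub_cancel]
    have htri : ‖w k - T z‖ ≤ ‖T (w k) - w k‖ + ‖w k - z‖ :=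
      calc ‖w k - T z‖ ≤ ‖w k - T (w k)‖ + ‖T (w k) - T z‖ :=
            norm_sub_le_norm_sub_add_norm_sub _ _ _
        _ ≤ ‖T (w k) - w k‖ + ‖w k - z‖ := by
          rw [norm_sub_rev (w k)]
          gcongr
          simpa using hT.norm_sub_le (hwD k) hzD
    nlinarith [norm_nonneg (w k - T z), norm_nonneg (T (w k) - w k), norm_nonneg (w k - z),
      mul_le_mul_of_nonneg_left (hB k) (norm_nonneg (T (w k) - w k))]
  have hlhs : Tendsto (fun k => 2 * ⟪w k - z, z - T z⟫ + ‖z - T z‖ ^ 2) atTop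
      (𝓝 (‖z - T z‖ ^ 2)) := by
    have := ((hwz (z - T z)).sub_const ⟪z, z - T z⟫).const_mul 2
    simpa [inner_sub_left] using this.add_const (‖z - T z‖ ^ 2)
  have hrhs : Tendsto (fun k => ‖T (w k) - w k‖ ^ 2 + 2 * ‖T (w k) - w k‖ * (C + ‖z‖)) atTop
      (𝓝 0) := by
    simpa using (hres.pow 2).add ((hres.const_mul 2).mul_const (C + ‖z‖))
  have h0 : ‖z - T z‖ ^ 2 = 0 :=
    le_antisymm (le_of_tendsto_of_tendsto' hlhs hrhs hle) (sq_nonneg _)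
  exact (sub_eq_zero.mp (by simpa using h0)).symm

end Weak

section Fejer

variable {E : Type*} [SeminormedAddCommGroup E] {x : ℕ → E} {q : E} {c : ℝ}

theorem antitone_norm_sub_of_sq_add_le (hc : 0 ≤ c)
    (h : ∀ n, ‖x (n + 1) - q‖ ^ 2 + c * ‖x (n + 1) - x n‖ ^ 2 ≤ ‖x n - q‖ ^ 2) :
    Antitone fun n => ‖x n - q‖ := by
  refine antitone_nat_of_succ_le fun n => (sq_le_sq₀ (norm_nonneg _) (norm_nonneg _)).mp ?_
  nlinarith [h n, mul_nonneg hc (sq_nonneg ‖x (n + 1) - x n‖)]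

theorem exists_tendsto_norm_sub_of_sq_add_le (hc : 0 ≤ c)
    (h : ∀ n, ‖x (n + 1) - q‖ ^ 2 + c * ‖x (n + 1) - x n‖ ^ 2 ≤ ‖x n - q‖ ^ 2) :
    ∃ l, Tendsto (fun n => ‖x n - q‖) atTop (𝓝 l) :=
  ⟨_, tendsto_atTop_ciInf (antitone_norm_sub_of_sq_add_le hc h) ⟨0, by
    rintro _ ⟨n, rfl⟩
    exact norm_nonneg _⟩⟩

theorem tendsto_norm_succ_sub_of_sq_add_le (hc : 0 < c)
    (h : ∀ n, ‖x (n + 1) - q‖ ^ 2 + c * ‖x (n + 1) - x n‖ ^ 2 ≤ ‖x n - q‖ ^ 2) :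
    Tendsto (fun n => ‖x (n + 1) - x n‖) atTop (𝓝 0) := by
  obtain ⟨l, hl⟩ := exists_tendsto_norm_sub_of_sq_add_le hc.le h
  have hdiff : Tendsto (fun n => (‖x n - q‖ ^ 2 - ‖x (n + 1) - q‖ ^ 2) / c) atTop (𝓝 0) := by
    simpa using ((hl.pow 2).sub ((hl.comp (tendsto_add_atTop_nat 1)).pow 2)).div_const c
  have hsq : Tendsto (fun n => ‖x (n + 1) - x n‖ ^ 2) atTop (𝓝 0) :=
    squeeze_zero (fun n => sq_nonneg _)
      (fun n => by rw [le_div_iff₀ hc]; linarith [h n]) hdiff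
  simpa using hsq.sqrt

end Fejer

section Averaged

variable {H : Type*} [NormedAddCommGroup H] [InnerProductSpace ℝ H] {θ : ℝ}

theorem lipschitzOnWith_one_of_eqOn_averaged {D : Set H} {T N : H → H}
    (hN : LipschitzOnWith 1 N D) (hT : Set.EqOn T (fun x => (1 - θ) • x + θ • N x) D)
    (hθ0 : 0 ≤ θ) (hθ1 : θ ≤ 1) :
    LipschitzOnWith 1 T D := by
  refine lipschitzOnWith_iff_norm_sub_le.mpr fun x hx y hy => ?_
  rw [hT hx, hT hy, NNReal.coe_one, one_mul]
  calc ‖(1 - θ) • x + θ • N x - ((1 - θ) • y + θ • N y)‖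
      = ‖(1 - θ) • (x - y) + θ • (N x - N y)‖ := by congr 1; module
    _ ≤ (1 - θ) * ‖x - y‖ + θ * ‖N x - N y‖ := by
      refine (norm_add_le _ _).trans_eq ?_
      rw [norm_smul_of_nonneg (by linarith), norm_smul_of_nonneg hθ0]
    _ ≤ (1 - θ) * ‖x - y‖ + θ * ‖x - y‖ := by
      gcongr
      simpa using hN.norm_sub_le hx hy
    _ = ‖x - y‖ := by ring

theorem eq_of_eq_smul_add_smul (hθ : θ ≠ 0) {q b : H} (h : q = (1 - θ) • q + θ • b) : b = q := by
  have : θ • (b - q) = 0 := by linear_combination (norm := module) -h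
  exact sub_eq_zero.mp ((smul_eq_zero.mp this).resolve_left hθ)

theorem norm_smul_add_smul_sub_sq_add_le (hθ : 0 < θ) {a b q : H} (hb : ‖b - q‖ ≤ ‖a - q‖) :
    ‖(1 - θ) • a + θ • b - q‖ ^ 2 + (1 - θ) / θ * ‖(1 - θ) • a + θ • b - a‖ ^ 2 ≤
      ‖a - q‖ ^ 2 := by
  have e1 : (1 - θ) • a + θ • b - q = (1 - θ) • (a - q) + θ • (b - q) := by module
  have e2 : (1 - θ) • a + θ • b - a = θ • ((b - q) - (a - q)) := by module
  rw [e1, e2]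
  generalize a - q = A at hb ⊢
  generalize b - q = B at hb ⊢
  rw [norm_add_sq_real, norm_smul, norm_smul, norm_smul, mul_pow, mul_pow, mul_pow,
    norm_sub_sq_real B A, real_inner_smul_left, real_inner_smul_right, real_inner_comm A B]
  simp only [Real.norm_eq_abs, sq_abs]
  have hsq : ‖B‖ ^ 2 ≤ ‖A‖ ^ 2 := by gcongr
  have hθ2 : (1 - θ) / θ * θ ^ 2 = (1 - θ) * θ := by field_simp
  rw [← mul_assoc ((1 - θ) / θ), hθ2]
  -- the cross terms cancel, leaving `(1 - θ) ‖A‖² + θ ‖B‖²`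
  nlinarith [mul_le_mul_of_nonneg_left hsq hθ.le]

end Averaged

theorem stmt5_general {H : Type*} [NormedAddCommGroup H] [InnerProductSpace ℝ H] [CompleteSpace H]
    (D : Set H) (hDcl : IsClosed D) (hDcv : Convex ℝ D)
    (θ : ℝ) (hθ0 : 0 < θ) (hθ1 : θ < 1)
    (T N : H → H)
    (hTD : Set.MapsTo T D D)
    (hNnonexp : ∀ x ∈ D, ∀ y ∈ D, ‖N x - N y‖ ≤ ‖x - y‖)
    (havg : ∀ x ∈ D, T x = (1 - θ) • x + θ • N x)
    (hfix : ∃ x ∈ D, T x = x) :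
    ∀ x0 ∈ D, ∃ xs ∈ D, T xs = xs ∧
      ∀ y : H, Filter.Tendsto (fun n => (inner ℝ (T^[n] x0) y : ℝ)) Filter.atTop
        (nhds (inner ℝ xs y : ℝ)) := by
  obtain ⟨p, hpD, hpT⟩ := hfix
  intro x0 hx0
  have hN : LipschitzOnWith 1 N D :=
    LipschitzOnWith.mk_one fun x hx y hy => by simpa only [dist_eq_norm] using hNnonexp x hx y hy
  have hT := lipschitzOnWith_one_of_eqOn_averaged hN havg hθ0.le hθ1.le
  set x : ℕ → H := fun n => T^[n] x0
  have hxD : ∀ n, x n ∈ D := fun n => hTD.iterate n hx0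
  have hxsucc : ∀ n, x (n + 1) = T (x n) := fun n => Function.iterate_succ_apply' T n x0
  set F := {q ∈ D | Function.IsFixedPt T q}
  have hc : 0 < (1 - θ) / θ := div_pos (by linarith) hθ0
  have hfejer : ∀ q ∈ F, ∀ n,
      ‖x (n + 1) - q‖ ^ 2 + (1 - θ) / θ * ‖x (n + 1) - x n‖ ^ 2 ≤ ‖x n - q‖ ^ 2 := by
    rintro q ⟨hqD, hqT⟩ n
    have hNq : N q = q := eq_of_eq_smul_add_smul hθ0.ne' (hqT.symm.trans (havg q hqD))
    rw [hxsucc, havg _ (hxD n)]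
    exact norm_smul_add_smul_sub_sq_add_le hθ0 (by simpa [hNq] using hN.norm_sub_le (hxD n) hqD)
  have hbound : ∀ n, ‖x n‖ ≤ ‖x0 - p‖ + ‖p‖ := fun n =>
    calc ‖x n‖ ≤ ‖x n - p‖ + ‖p‖ := norm_le_norm_sub_add _ _
      _ ≤ ‖x0 - p‖ + ‖p‖ := by
        gcongr
        exact antitone_norm_sub_of_sq_add_le hc.le (hfejer p ⟨hpD, hpT⟩) (Nat.zero_le n)
  have hres : Tendsto (fun n => ‖T (x n) - x n‖) atTop (𝓝 0) := by
    simpa only [hxsucc] using tendsto_norm_succ_sub_of_sq_add_le hc (hfejer p ⟨hpD, hpT⟩)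
  obtain ⟨z, ⟨hzD, hzT⟩, hz⟩ := exists_weakTendsto_of_tendsto_norm_sub hbound
    (fun q hq => exists_tendsto_norm_sub_of_sq_add_le hc.le (hfejer q hq))
    fun φ w hφ hw => hT.isFixedPt_of_weakTendsto hDcl hDcv (fun k => hxD _) (fun k => hbound _)
      hw (hres.comp hφ)
  exact ⟨z, hzD, hzT, hz⟩

/-- Krasnosel'skiĭ–Mann: if `T` is a `θ`-averaged self-map of a nonempty closed convex
subset `D` of a Hilbert space (`0 < θ < 1`) with a fixed point, then the Picard iteration
converges weakly to a fixed point of `T`. -/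
theorem stmt5 {H : Type*} [NormedAddCommGroup H] [InnerProductSpace ℝ H] [CompleteSpace H]
    (D : Set H) (hDne : D.Nonempty) (hDcl : IsClosed D) (hDcv : Convex ℝ D)
    (θ : ℝ) (hθ0 : 0 < θ) (hθ1 : θ < 1)
    (T N : H → H)
    (hTD : Set.MapsTo T D D)
    (hNnonexp : ∀ x ∈ D, ∀ y ∈ D, ‖N x - N y‖ ≤ ‖x - y‖)
    (havg : ∀ x ∈ D, T x = (1 - θ) • x + θ • N x)
    (hfix : ∃ x ∈ D, T x = x) :
    ∀ x0 ∈ D, ∃ xs ∈ D, T xs = xs ∧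
      ∀ y : H, Filter.Tendsto (fun n => (inner ℝ (T^[n] x0) y : ℝ)) Filter.atTop
        (nhds (inner ℝ xs y : ℝ)) :=
  stmt5_general D hDcl hDcv θ hθ0 hθ1 T N hTD hNnonexp havg hfix
end

section
/- Let A, B, C be operators on a Hilbert space H and α > 0. Define the operator T = Id − J_{αB} + J_{αA} ∘ (2 J_{αB} − Id + αC ∘ J_{αB}), where J denotes the resolvent. Then a point z is a fixed point of T if and only if x = J_{αB}(z) satisfies 0 ∈ (A + B − C)(x), assuming the resolvents are single-valued on the relevant domain. -/
/-!
Put `x = J_{αB} z`, so that `z = x + αBx`. Then `T z = z` says `J_{αA} w = x` for the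
reflected point `w = 2x − z + αCx`, i.e. `x + αAx = w`. Substituting `z = x + αBx`, the
difference `w − (x + αAx)` is `−α(Ax + Bx − Cx)`, which vanishes exactly when
`Ax + Bx − Cx = 0` since `α ≠ 0`.
-/

theorem resolvent_eq_iff {R E : Type*} [Add E] [SMul R E] {A J : E → E} {α : R}
    (hJ : ∀ z, J z + α • A (J z) = z) (hJuniq : ∀ z y, y + α • A y = z → y = J z) {w x : E} :
    J w = x ↔ x + α • A x = w :=
  ⟨fun h => h ▸ hJ w, fun h => (hJuniq w x h).symm⟩

theorem add_smul_eq_two_smul_sub_add_smul_iff {K E : Type*} [Field K] [AddCommGroup E]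
    [Module K E] {α : K} (hα : α ≠ 0) {x z a b c : E} (hz : x + α • b = z) :
    x + α • a = (2 : K) • x - z + α • c ↔ a + b - c = 0 := by
  subst hz
  rw [eq_comm, ← sub_eq_zero,
    show (2 : K) • x - (x + α • b) + α • c - (x + α • a) = -(α • (a + b - c)) by module,
    neg_eq_zero, smul_eq_zero, or_iff_right hα]

theorem stmt7_general {H : Type*} [NormedAddCommGroup H] [InnerProductSpace ℝ H]
    (A B C : H → H) (α : ℝ) (hα : 0 < α)
    (JA JB : H → H)
    (hJA : ∀ z, JA z + α • A (JA z) = z)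
    (hJAuniq : ∀ z y, y + α • A y = z → y = JA z)
    (hJB : ∀ z, JB z + α • B (JB z) = z)
    (T : H → H)
    (hT : ∀ z, T z = z - JB z + JA ((2 : ℝ) • JB z - z + α • C (JB z))) :
    ∀ z : H, T z = z ↔ A (JB z) + B (JB z) - C (JB z) = 0 := by
  intro z
  rw [hT, sub_add_eq_add_sub, sub_eq_iff_eq_add, add_right_inj, resolvent_eq_iff hJA hJAuniq,
    add_smul_eq_two_smul_sub_add_smul_iff hα.ne' (hJB z)]

/-- For operators `A, B, C` on a Hilbert space with single-valued resolvents `JA = J_{αA}`,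
`JB = J_{αB}` and `α > 0`, a point `z` is a fixed point of
`T = Id − J_{αB} + J_{αA}∘(2J_{αB} − Id + αC∘J_{αB})` if and only if `x = J_{αB}(z)`
satisfies `(A + B − C)(x) = 0`. -/
theorem stmt7 {H : Type*} [NormedAddCommGroup H] [InnerProductSpace ℝ H]
    (A B C : H → H) (α : ℝ) (hα : 0 < α)
    (JA JB : H → H)
    (hJA : ∀ z, JA z + α • A (JA z) = z)
    (hJAuniq : ∀ z y, y + α • A y = z → y = JA z)
    (hJB : ∀ z, JB z + α • B (JB z) = z)
    (hJBuniq : ∀ z y, y + α • B y = z → y = JB z)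
    (T : H → H)
    (hT : ∀ z, T z = z - JB z + JA ((2 : ℝ) • JB z - z + α • C (JB z))) :
    ∀ z : H, T z = z ↔ A (JB z) + B (JB z) - C (JB z) = 0 :=
  stmt7_general A B C α hα JA JB hJA hJAuniq hJB T hT
end

section
/- Let A : H → H be maximally monotone and let 𝐀 : H^M → H^M be the diagonal lifting 𝐀(x₁,...,x_M) = (A x₁, ..., A x_M). Let N_C be the normal cone of the consensus subspace C ⊆ H^M. Then the resolvent of 𝐀 + N_C satisfies J_{𝐀 + N_C}(x) = J_𝐀(P_C(x)), i.e., it equals the componentwise resolvent of A applied to the average (1/M)Σᵢ xᵢ, replicated M times. -/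
/-!
On the consensus subspace `y = (z, …, z)` the residual `Σᵢ (xᵢ − yᵢ − A yᵢ)` equals
`Σᵢ xᵢ − M (z + A z)`, so it vanishes exactly when `z + A z` is the average of the `xᵢ`,
i.e. when `z` is the resolvent of `A` at that average.
-/

open Finset

section Average

variable {ι H : Type*} [Fintype ι] [AddCommGroup H] [Module ℝ H]

theorem sum_sub_const_eq (x : ι → H) (v : H) :
    ∑ i, (x i - v) = ∑ i, x i - (Fintype.card ι : ℝ) • v := by
  rw [sum_sub_distrib, sum_const, card_univ, Nat.cast_smul_eq_nsmul]

theorem card_smul_inv_card_smul_sum (x : ι → H) :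
    (Fintype.card ι : ℝ) • (Fintype.card ι : ℝ)⁻¹ • ∑ i, x i = ∑ i, x i := by
  cases isEmpty_or_nonempty ι
  · simp
  · rw [smul_smul, mul_inv_cancel₀ (by positivity), one_smul]

theorem eq_inv_card_smul_sum_of_sum_eq [Nonempty ι] {x : ι → H} {v : H}
    (h : ∑ i, x i = (Fintype.card ι : ℝ) • v) : v = (Fintype.card ι : ℝ)⁻¹ • ∑ i, x i := by
  rw [h, smul_smul, inv_mul_cancel₀ (by positivity), one_smul]

end Average

theorem stmt16_general {H : Type*} [NormedAddCommGroup H] [InnerProductSpace ℝ H]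
    (M : ℕ)
    (A : H → H)
    (JA : H → H)
    (hJA : ∀ z, JA z + A (JA z) = z)
    (hJAuniq : ∀ z y, y + A y = z → y = JA z) :
    ∀ x y : Fin M → H,
      ((∃ z : H, ∀ i, y i = z) ∧ ∑ i, (x i - y i - A (y i)) = 0) ↔
      (∀ i, y i = JA ((M : ℝ)⁻¹ • ∑ j, x j)) := by
  intro x y
  have residual (z : H) : ∑ i : Fin M, (x i - z - A z) = ∑ i, x i - (M : ℝ) • (z + A z) := by
    simp only [sub_sub, sum_sub_const_eq, Fintype.card_fin]
  constructor
  · rintro ⟨⟨z, hz⟩, hsum⟩ i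
    obtain rfl : y = fun _ => z := funext hz
    have : Nonempty (Fin M) := ⟨i⟩
    rw [residual, sub_eq_zero] at hsum
    have hres : z + A z = (Fintype.card (Fin M) : ℝ)⁻¹ • ∑ j, x j :=
      eq_inv_card_smul_sum_of_sum_eq (by rwa [Fintype.card_fin])
    rw [Fintype.card_fin] at hres
    exact hJAuniq _ _ hres
  · intro h
    refine ⟨⟨_, h⟩, ?_⟩
    obtain rfl : y = fun _ => JA ((M : ℝ)⁻¹ • ∑ j, x j) := funext h
    have hM := card_smul_inv_card_smul_sum x
    rw [Fintype.card_fin] at hM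
    rw [residual, hJA, hM, sub_self]

/-- Resolvent of a diagonal lifting plus the normal cone of the consensus subspace:
if `A` is (maximally) monotone with single-valued, everywhere-defined resolvent
`JA = (Id + A)⁻¹`, then `y = J_{𝐀 + N_C}(x)` — i.e. `x − y − 𝐀y ∈ N_C(y)`, which means
`y` is in the consensus subspace and `Σᵢ (xᵢ − yᵢ − A yᵢ) = 0` — holds if and only if
`y = (JA(x̄),...,JA(x̄))` with `x̄ = (1/M)Σᵢ xᵢ`. -/
theorem stmt16 {H : Type*} [NormedAddCommGroup H] [InnerProductSpace ℝ H]
    (M : ℕ) (hM : 1 ≤ M)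
    (A : H → H)
    (hmono : ∀ x y, (0 : ℝ) ≤ inner ℝ (A x - A y) (x - y))
    (JA : H → H)
    (hJA : ∀ z, JA z + A (JA z) = z)
    (hJAuniq : ∀ z y, y + A y = z → y = JA z) :
    ∀ x y : Fin M → H,
      ((∃ z : H, ∀ i, y i = z) ∧ ∑ i, (x i - y i - A (y i)) = 0) ↔
      (∀ i, y i = JA ((M : ℝ)⁻¹ • ∑ j, x j)) :=
  stmt16_general M A JA hJA hJAuniq
end
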